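/- arXiv:1008.1661 — 2 statements merged into one kernel-verified Lean document; each statement's English description precedes it below -/
import Mathlib

section
/- Kleene star upper bound: let L be a suffix-free regular language over an alphabet Σ with NSC(L) = m. Then NSC(L*) ≤ m, i.e., there is an NFA with at most m states accepting the Kleene star L*. -/
/-!
Take an NFA for `L` and delete every transition into its start state. Since `L` is suffix-free
this loses no word: an accepting run that re-enters the start state can be cut at its last visit
there, leaving an accepting run on a suffix, which by suffix-freeness is the whole word. The
resulting automaton is non-returning, and for such an automaton `L∗` is accepted on the same
states by making the start state accepting and redirecting a copy of every transition into an
accepting state to the start state. Non-returning matters for soundness: a run that ends in the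
start state has just completed a word of `L` (or is empty), so it cannot end in the middle of one.
-/

open Computability

/-- A nondeterministic finite automaton with a single start state and
no ε-transitions. -/
structure SNFA (α : Type) (σ : Type) where
  step : σ → α → Set σ
  start : σ
  accept : Set σ

namespace SNFA

variable {α σ : Type}

/-- The set of states reachable from some state in `S` by one transition on `a`. -/
def stepSet (M : SNFA α σ) (S : Set σ) (a : α) : Set σ :=
  ⋃ s ∈ S, M.step s a

/-- The set of states reachable from the set `S` of states by reading the word `w`. -/
def evalFrom (M : SNFA α σ) (S : Set σ) (w : List α) : Set σ :=
  w.foldl M.stepSet S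

/-- The language accepted by `M`: all words spelled out by a path
from the start state to an accepting state. -/
def accepts (M : SNFA α σ) : Language α :=
  {w | ∃ q ∈ M.accept, q ∈ M.evalFrom {M.start} w}

end SNFA

/-- A language is suffix-free if no word of the language is a proper suffix
of another word of the language. -/
def SuffixFree {α : Type} (L : Language α) : Prop :=
  ∀ u v : List α, u ∈ L → v ∈ L → u <:+ v → u = v

/-- `NSCle L k`: there is an NFA with at most `k` states accepting `L`
(so the nondeterministic state complexity of `L` is at most `k`). -/
def NSCle {α : Type} (L : Language α) (k : ℕ) : Prop :=
  ∃ (σ : Type) (x : Fintype σ) (M : SNFA α σ), M.accepts = L ∧ @Fintype.card σ x ≤ k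

/-- `NSCge L k`: every NFA accepting `L` has at least `k` states
(so the nondeterministic state complexity of `L` is at least `k`). -/
def NSCge {α : Type} (L : Language α) (k : ℕ) : Prop :=
  ∀ (σ : Type) [Fintype σ] (M : SNFA α σ), M.accepts = L → k ≤ Fintype.card σ

/-- `NSCeq L m`: the nondeterministic state complexity of `L` is exactly `m`:
some NFA with `m` states accepts `L` and every NFA accepting `L` has at least
`m` states. -/
def NSCeq {α : Type} (L : Language α) (m : ℕ) : Prop :=
  NSCle L m ∧ NSCge L m

lemma Language.append_mem_kstar {α : Type} {L : Language α} {u v : List α} (hu : u ∈ L∗)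
    (hv : v ∈ L) : u ++ v ∈ L∗ :=
  (kstar_mul_le_kstar : L∗ * L ≤ L∗) (Language.append_mem_mul hu hv)

namespace SNFA

variable {α σ : Type}

lemma mem_evalFrom_append_singleton {M : SNFA α σ} {S : Set σ} {w : List α} {a : α} {q : σ} :
    q ∈ M.evalFrom S (w ++ [a]) ↔ ∃ p ∈ M.evalFrom S w, q ∈ M.step p a := by
  simp [evalFrom, stepSet, List.foldl_append]

lemma evalFrom_append (M : SNFA α σ) (S : Set σ) (u v : List α) :
    M.evalFrom S (u ++ v) = M.evalFrom (M.evalFrom S u) v :=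
  List.foldl_append

lemma evalFrom_mono {M N : SNFA α σ} (h : ∀ q a, M.step q a ⊆ N.step q a)
    {S T : Set σ} (hST : S ⊆ T) (w : List α) : M.evalFrom S w ⊆ N.evalFrom T w := by
  induction w generalizing S T with
  | nil => exact hST
  | cons a w ih =>
    refine ih fun q hq => ?_
    simp only [stepSet, Set.mem_iUnion] at hq ⊢
    obtain ⟨s, hs, hqs⟩ := hq
    exact ⟨s, hST hs, h s a hqs⟩

def IsNonreturning (M : SNFA α σ) : Prop :=
  ∀ q a, M.start ∉ M.step q a

lemma IsNonreturning.eq_nil_of_start_mem_evalFrom {M : SNFA α σ} (hM : M.IsNonreturning)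
    {w : List α} (h : M.start ∈ M.evalFrom {M.start} w) : w = [] := by
  rcases List.eq_nil_or_concat w with rfl | ⟨w, a, rfl⟩
  · rfl
  · rw [List.concat_eq_append, mem_evalFrom_append_singleton] at h
    obtain ⟨p, -, hp⟩ := h
    exact absurd hp (hM p a)

def prune (M : SNFA α σ) : SNFA α σ where
  step q a := M.step q a \ {M.start}
  start := M.start
  accept := M.accept

lemma isNonreturning_prune (M : SNFA α σ) : M.prune.IsNonreturning :=
  fun _ _ h => h.2 rfl

lemma evalFrom_prune_subset (M : SNFA α σ) (S : Set σ) (w : List α) :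
    M.prune.evalFrom S w ⊆ M.evalFrom S w :=
  evalFrom_mono (fun _ _ => Set.sdiff_subset) subset_rfl w

lemma exists_suffix_mem_evalFrom_prune {M : SNFA α σ} {w : List α} {q : σ}
    (h : q ∈ M.evalFrom {M.start} w) : ∃ v, v <:+ w ∧ q ∈ M.prune.evalFrom {M.start} v := by
  induction w using List.reverseRecOn generalizing q with
  | nil => exact ⟨[], List.nil_suffix, h⟩
  | append_singleton w a ih =>
    obtain ⟨p, hp, hq⟩ := mem_evalFrom_append_singleton.1 h
    by_cases hqs : q = M.start
    · exact ⟨[], List.nil_suffix, hqs⟩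
    · obtain ⟨v, hvw, hpv⟩ := ih hp
      exact ⟨v ++ [a], List.suffix_append_self_iff.2 hvw,
        mem_evalFrom_append_singleton.2 ⟨p, hpv, hq, hqs⟩⟩

lemma accepts_prune_of_suffixFree {M : SNFA α σ} (hsf : SuffixFree M.accepts) :
    M.prune.accepts = M.accepts := by
  refine Set.Subset.antisymm (fun w ⟨q, hq, hw⟩ => ⟨q, hq, evalFrom_prune_subset M _ w hw⟩) ?_
  rintro w ⟨q, hq, hw⟩
  obtain ⟨v, hvw, hv⟩ := exists_suffix_mem_evalFrom_prune hw
  obtain rfl : v = w := hsf v w ⟨q, hq, evalFrom_prune_subset M _ v hv⟩ ⟨q, hq, hw⟩ hvw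
  exact ⟨q, hq, hv⟩

def star (M : SNFA α σ) : SNFA α σ where
  step q a := M.step q a ∪ {p | p = M.start ∧ ∃ f ∈ M.step q a, f ∈ M.accept}
  start := M.start
  accept := insert M.start M.accept

lemma step_subset_star (M : SNFA α σ) (q : σ) (a : α) : M.step q a ⊆ M.star.step q a :=
  Set.subset_union_left

lemma exists_append_of_mem_evalFrom_star {M : SNFA α σ} {w : List α} {q : σ}
    (h : q ∈ M.star.evalFrom {M.start} w) :
    ∃ u v, w = u ++ v ∧ u ∈ M.accepts∗ ∧ q ∈ M.evalFrom {M.start} v := by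
  induction w using List.reverseRecOn generalizing q with
  | nil => exact ⟨[], [], rfl, Language.nil_mem_kstar _, h⟩
  | append_singleton w a ih =>
    obtain ⟨p, hp, hq⟩ := mem_evalFrom_append_singleton.1 h
    obtain ⟨u, v, rfl, hu, hpv⟩ := ih hp
    rcases hq with hq | ⟨rfl, f, hf, hfa⟩
    · exact ⟨u, v ++ [a], List.append_assoc _ _ _, hu,
        mem_evalFrom_append_singleton.2 ⟨p, hpv, hq⟩⟩
    · have hva : v ++ [a] ∈ M.accepts := ⟨f, hfa, mem_evalFrom_append_singleton.2 ⟨p, hpv, hf⟩⟩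
      exact ⟨u ++ (v ++ [a]), [], by simp, Language.append_mem_kstar hu hva, rfl⟩

lemma start_mem_evalFrom_star_of_mem_accepts {M : SNFA α σ} {u : List α} (hu : u ∈ M.accepts) :
    M.start ∈ M.star.evalFrom {M.start} u := by
  rcases List.eq_nil_or_concat u with rfl | ⟨u, a, rfl⟩
  · rfl
  · obtain ⟨f, hf, hu⟩ := hu
    rw [List.concat_eq_append, mem_evalFrom_append_singleton] at hu ⊢
    obtain ⟨p, hp, hpf⟩ := hu
    exact ⟨p, evalFrom_mono (step_subset_star M) subset_rfl u hp, Or.inr ⟨rfl, f, hpf, hf⟩⟩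

lemma start_mem_evalFrom_star_of_mem_kstar {M : SNFA α σ} {w : List α} (hw : w ∈ M.accepts∗) :
    M.start ∈ M.star.evalFrom {M.start} w := by
  obtain ⟨S, rfl, hS⟩ := Language.mem_kstar.1 hw
  clear hw
  induction S with
  | nil => rfl
  | cons u S ih =>
    rw [List.flatten_cons, evalFrom_append]
    refine evalFrom_mono (fun _ _ => subset_rfl) ?_ S.flatten
      (ih fun y hy => hS y (List.mem_cons_of_mem _ hy))
    exact Set.singleton_subset_iff.2
      (start_mem_evalFrom_star_of_mem_accepts (hS u List.mem_cons_self))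

lemma IsNonreturning.accepts_star {M : SNFA α σ} (hM : M.IsNonreturning) :
    M.star.accepts = M.accepts∗ := by
  refine Set.Subset.antisymm ?_ fun w hw => ⟨M.start, Set.mem_insert _ _,
    start_mem_evalFrom_star_of_mem_kstar hw⟩
  rintro w ⟨q, hq, hw⟩
  obtain ⟨u, v, rfl, hu, hv⟩ := exists_append_of_mem_evalFrom_star hw
  rcases hq with rfl | hq
  · rwa [hM.eq_nil_of_start_mem_evalFrom hv, List.append_nil]
  · exact Language.append_mem_kstar hu ⟨q, hq, hv⟩

end SNFA

/-- **Kleene star, upper bound.** If `L` is a suffix-free regular language with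
nondeterministic state complexity `m`, then some NFA with at most `m` states
accepts the Kleene star `L∗`. -/
theorem kstar_upper {α : Type} (L : Language α) (m : ℕ)
    (hsf : SuffixFree L) (hm : NSCeq L m) :
    NSCle (L∗) m := by
  obtain ⟨⟨σ, _, M, rfl, hcard⟩, -⟩ := hm
  refine ⟨σ, _, M.prune.star, ?_, hcard⟩
  rw [M.isNonreturning_prune.accepts_star, SNFA.accepts_prune_of_suffixFree hsf]
end

section
/- Reversal upper bound: let L be a regular language over an alphabet Σ with NSC(L) = m. Then NSC(L^R) ≤ m + 1, i.e., there is an NFA with at most m + 1 states accepting the reversal L^R = { w^R : w ∈ L }. -/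
open Computability

/-- The reversal of a language: `L^R = { w^R : w ∈ L }`. -/
def revLang {α : Type} (L : Language α) : Language α :=
  {w | w.reverse ∈ L}

/-! Reversing every transition of an NFA for `L` gives an NFA for `L^R` on the same states, whose
start states are the old accepting states. A single fresh state that behaves like this whole start
set turns it into an NFA with one start state, at the cost of one extra state. -/

namespace SNFA

variable {α σ : Type}

def toNFA (M : SNFA α σ) : NFA α σ where
  step := M.step
  start := {M.start}
  accept := M.accept

theorem mem_accepts (M : SNFA α σ) (w : List α) :
    w ∈ M.accepts ↔ ∃ q ∈ M.accept, q ∈ M.evalFrom {M.start} w := Iff.rfl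

theorem accepts_toNFA (M : SNFA α σ) : M.toNFA.accepts = M.accepts := rfl

theorem accepts_toNFA_reverse (M : SNFA α σ) : M.toNFA.reverse.accepts = revLang M.accepts := by
  ext w
  rw [NFA.mem_accepts_reverse, accepts_toNFA]
  rfl

end SNFA

namespace NFA

variable {α σ : Type}

/-- The start set of `M` is replaced by one fresh state `none` that stands for the whole of it. -/
def toSNFA (M : NFA α σ) : SNFA α (Option σ) where
  step
    | none, a => some '' M.stepSet M.start a
    | some s, a => some '' M.step s a
  start := none
  accept := some '' M.accept ∪ {p | p = none ∧ ∃ s ∈ M.accept, s ∈ M.start}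

theorem toSNFA_stepSet_image_some (M : NFA α σ) (S : Set σ) (a : α) :
    M.toSNFA.stepSet (some '' S) a = some '' M.stepSet S a := by
  simp only [SNFA.stepSet, NFA.stepSet, Set.biUnion_image, Set.image_iUnion₂]
  rfl

theorem toSNFA_evalFrom_image_some (M : NFA α σ) (S : Set σ) (w : List α) :
    M.toSNFA.evalFrom (some '' S) w = some '' M.evalFrom S w := by
  induction w generalizing S with
  | nil => rfl
  | cons a w ih =>
    simp only [SNFA.evalFrom, List.foldl_cons] at ih ⊢
    rw [toSNFA_stepSet_image_some, ih]
    rfl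

theorem toSNFA_evalFrom_start_cons (M : NFA α σ) (a : α) (w : List α) :
    M.toSNFA.evalFrom {M.toSNFA.start} (a :: w) = some '' M.evalFrom M.start (a :: w) := by
  have hstep : M.toSNFA.stepSet {M.toSNFA.start} a = some '' M.stepSet M.start a := by
    simp only [SNFA.stepSet, Set.mem_singleton_iff, Set.iUnion_iUnion_eq_left]
    rfl
  rw [SNFA.evalFrom, List.foldl_cons, hstep, NFA.evalFrom_cons]
  exact M.toSNFA_evalFrom_image_some _ w

@[simp]
theorem accepts_toSNFA (M : NFA α σ) : M.toSNFA.accepts = M.accepts := by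
  ext w
  rw [SNFA.mem_accepts, NFA.mem_accepts]
  cases w with
  | nil => simp [SNFA.evalFrom, toSNFA]
  | cons a w =>
    rw [toSNFA_evalFrom_start_cons]
    simp [toSNFA]

end NFA

theorem NSCle.mono {α : Type} {L : Language α} {k l : ℕ} (h : NSCle L k) (hkl : k ≤ l) :
    NSCle L l :=
  let ⟨σ, _, M, hM, hcard⟩ := h
  ⟨σ, _, M, hM, hcard.trans hkl⟩

theorem NSCle_of_NFA {α σ : Type} [Fintype σ] {L : Language α} (M : NFA α σ)
    (hM : M.accepts = L) : NSCle L (Fintype.card σ + 1) :=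
  ⟨Option σ, inferInstance, M.toSNFA, by rw [NFA.accepts_toSNFA, hM], Fintype.card_option.le⟩

/-- **Reversal, upper bound.** If `L` is a regular language with
nondeterministic state complexity `m`, then some NFA with at most `m + 1`
states accepts the reversal `L^R`. -/
theorem reversal_upper {α : Type} (L : Language α) (m : ℕ) (hm : NSCeq L m) :
    NSCle (revLang L) (m + 1) := by
  obtain ⟨⟨σ, _, M, rfl, hcard⟩, -⟩ := hm
  exact (NSCle_of_NFA M.toNFA.reverse M.accepts_toNFA_reverse).mono (Nat.add_le_add_right hcard 1)
end
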